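/- Let (G, τ, ⊕) be a topological gyrogroup and H a compact L-subgyrogroup of G. Then the quotient map φ : G → G/H is perfect, i.e., closed with compact fibers. -/
import Mathlib


universe u

/-- A gyrogroup: a set with a binary operation `+`, a (unique) two-sided identity `0`,
(unique) two-sided inverses `-x`, and gyroautomorphisms `gyr x y` satisfying the
left gyroassociative law and the left loop property. -/
class Gyrogroup (G : Type u) extends Add G, Zero G, Neg G where
  gyr : G → G → G → G
  zero_add : ∀ a : G, 0 + a = a
  add_zero : ∀ a : G, a + 0 = a
  zero_unique : ∀ e : G, (∀ a : G, e + a = a ∧ a + e = a) → e = 0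
  neg_add : ∀ a : G, -a + a = 0
  add_neg : ∀ a : G, a + -a = 0
  neg_unique : ∀ a b : G, (b + a = 0 ∧ a + b = 0) → b = -a
  gyr_bijective : ∀ x y : G, Function.Bijective (gyr x y)
  gyr_add : ∀ x y a b : G, gyr x y (a + b) = gyr x y a + gyr x y b
  add_gyroassoc : ∀ x y z : G, x + (y + z) = x + y + gyr x y z
  gyr_left_loop : ∀ x y : G, gyr (x + y) y = gyr x y

open Gyrogroup

/-- A topological gyrogroup: a gyrogroup with a topology making `+` jointly
continuous and negation continuous. -/
class TopologicalGyrogroup (G : Type u) [TopologicalSpace G] [Gyrogroup G] : Prop where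
  continuous_add : Continuous fun p : G × G => p.1 + p.2
  continuous_neg : Continuous fun x : G => -x

/-- `gadd A B = {a + b : a ∈ A, b ∈ B}`. -/
def gadd {G : Type u} [Gyrogroup G] (A B : Set G) : Set G := Set.image2 (· + ·) A B

/-- `gneg A = {-a : a ∈ A}`. -/
def gneg {G : Type u} [Gyrogroup G] (A : Set G) : Set G := (fun x : G => -x) '' A

/-- A subgyrogroup: a nonempty subset closed under `+` and negation. -/
def IsSubgyrogroup {G : Type u} [Gyrogroup G] (H : Set G) : Prop :=
  H.Nonempty ∧ (∀ x ∈ H, -x ∈ H) ∧ ∀ x ∈ H, ∀ y ∈ H, x + y ∈ H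

/-- An L-subgyrogroup: a subgyrogroup with `gyr a h '' H = H` for all `a ∈ G`, `h ∈ H`. -/
def IsLSubgyrogroup {G : Type u} [Gyrogroup G] (H : Set G) : Prop :=
  IsSubgyrogroup H ∧ ∀ a : G, ∀ h ∈ H, gyr a h '' H = H

section Basics

variable {G : Type u} [Gyrogroup G]

lemma gyro_left_cancel {a x y : G} (h : a + x = a + y) : x = y := by
  have h2 : -a + (a + x) = -a + (a + y) := by rw [h]
  rw [add_gyroassoc, add_gyroassoc, Gyrogroup.neg_add, Gyrogroup.zero_add, Gyrogroup.zero_add] at h2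
  exact (gyr_bijective (-a) a).1 h2

lemma gyro_gyr_zero (x y : G) : gyr x y (0 : G) = 0 := by
  have h : gyr x y ((0 : G) + 0) = gyr x y 0 + gyr x y 0 := gyr_add x y 0 0
  rw [Gyrogroup.zero_add] at h
  nth_rewrite 1 [← Gyrogroup.add_zero (gyr x y (0 : G))] at h
  exact (gyro_left_cancel h).symm

lemma gyro_gyr_neg (x y a : G) : gyr x y (-a) = -(gyr x y a) := by
  refine neg_unique (gyr x y a) (gyr x y (-a)) ⟨?_, ?_⟩
  · rw [← gyr_add, Gyrogroup.neg_add, gyro_gyr_zero]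
  · rw [← gyr_add, Gyrogroup.add_neg, gyro_gyr_zero]

lemma gyro_gyr_neg_self (a z : G) : gyr (-a) a z = z := by
  have h := gyr_left_loop (-a) a
  rw [Gyrogroup.neg_add] at h
  have h0 : gyr (0 : G) a z = z := by
    have := add_gyroassoc (0 : G) a z
    rw [Gyrogroup.zero_add, Gyrogroup.zero_add] at this
    exact (gyro_left_cancel this).symm
  rw [← h]; exact h0

lemma gyro_gyr_self_neg (a z : G) : gyr a (-a) z = z := by
  have h := gyr_left_loop a (-a)
  rw [Gyrogroup.add_neg] at h
  have h0 : gyr (0 : G) (-a) z = z := by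
    have := add_gyroassoc (0 : G) (-a) z
    rw [Gyrogroup.zero_add, Gyrogroup.zero_add] at this
    exact (gyro_left_cancel this).symm
  rw [← h]; exact h0

lemma gyro_Gyrogroup.neg_add_cancel (a b : G) : -a + (a + b) = b := by
  rw [add_gyroassoc, Gyrogroup.neg_add, Gyrogroup.zero_add, gyro_gyr_neg_self]

lemma gyro_Gyrogroup.add_neg_cancel (a b : G) : a + (-a + b) = b := by
  rw [add_gyroassoc, Gyrogroup.add_neg, Gyrogroup.zero_add, gyro_gyr_self_neg]

lemma gyro_neg_neg (a : G) : -(-a) = a :=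
  (neg_unique (-a) a ⟨Gyrogroup.add_neg a, Gyrogroup.neg_add a⟩).symm

/-- The gyrator identity. -/
lemma gyro_gyrator (x y z : G) : gyr x y z = -(x + y) + (x + (y + z)) := by
  rw [add_gyroassoc x y z, gyro_Gyrogroup.neg_add_cancel]

end Basics

section KeyMap

variable {G : Type u} [Gyrogroup G]

/-- `gyroF u h` recovers `p` from `u = p + h`. -/
def gyroF (u h : G) : G := u + (-(u + h) + u)

lemma gyroF_eq (u h : G) : gyroF u h = u + gyr u h (-h) := by
  have : gyr u h (-h) = -(u + h) + u := by
    rw [gyro_gyrator, Gyrogroup.add_neg, Gyrogroup.add_zero]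
  rw [gyroF, this]

lemma gyroF_add (p h : G) : gyroF (p + h) h = p := by
  rw [gyroF_eq, gyr_left_loop, ← add_gyroassoc, Gyrogroup.add_neg, Gyrogroup.add_zero]

lemma gyro_neg_gyroF_add (x h : G) :
    -(gyroF x h) + x = gyr x (-(gyr x h h)) (gyr x h h) := by
  have hc : gyroF x h = x + (-(gyr x h h)) := by
    rw [gyroF_eq, gyro_gyr_neg]
  set k := gyr x h h with hk
  rw [hc]
  rw [gyro_gyrator x (-k) k]
  rw [Gyrogroup.neg_add, Gyrogroup.add_zero]

end KeyMap

section Cosets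

variable {G : Type u} [Gyrogroup G] {H : Set G}

lemma gyro_zero_mem (hH : IsLSubgyrogroup H) : (0 : G) ∈ H := by
  obtain ⟨⟨h0, hh0⟩, hneg, hadd⟩ := hH.1
  have := hadd h0 hh0 (-h0) (hneg h0 hh0)
  rwa [Gyrogroup.add_neg] at this

lemma gyro_coset_eq_iff (hH : IsLSubgyrogroup H) (x a : G) :
    (fun h => x + h) '' H = (fun h => a + h) '' H ↔ x ∈ (fun h => a + h) '' H := by
  constructor
  · intro heq
    have hx : x ∈ (fun h => x + h) '' H := ⟨0, gyro_zero_mem hH, Gyrogroup.add_zero x⟩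
    rwa [heq] at hx
  · rintro ⟨h, hh, rfl⟩
    ext z
    constructor
    · rintro ⟨k, hk, rfl⟩
      obtain ⟨k', hk', hkk'⟩ : k ∈ gyr a h '' H := by rw [hH.2 a h hh]; exact hk
      refine ⟨h + k', hH.1.2.2 h hh k' hk', ?_⟩
      simp only
      rw [add_gyroassoc a h k', hkk']
    · rintro ⟨k, hk, rfl⟩
      have hmem : -h + k ∈ H := hH.1.2.2 (-h) (hH.1.2.1 h hh) k hk
      refine ⟨gyr a h (-h + k), ?_, ?_⟩
      · rw [← hH.2 a h hh]; exact ⟨-h + k, hmem, rfl⟩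
      · simp only
        rw [← add_gyroassoc, gyro_Gyrogroup.add_neg_cancel]

/-- If `gyroF x h ∈ P` with `h ∈ H`, then `x ∈ P ⊕ H`. -/
lemma gyro_mem_gadd_of_gyroF (hH : IsLSubgyrogroup H) {P : Set G} {x h : G}
    (hh : h ∈ H) (hp : gyroF x h ∈ P) : x ∈ gadd P H := by
  have hk : gyr x h h ∈ H := by
    rw [← hH.2 x h hh]; exact ⟨h, hh, rfl⟩
  set k := gyr x h h with hkdef
  have hnk : -k ∈ H := hH.1.2.1 k hk
  have hmem : gyr x (-k) k ∈ H := by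
    rw [← hH.2 x (-k) hnk]; exact ⟨k, hk, rfl⟩
  have heq : -(gyroF x h) + x = gyr x (-k) k := gyro_neg_gyroF_add x h
  refine ⟨gyroF x h, hp, -(gyroF x h) + x, ?_, gyro_Gyrogroup.add_neg_cancel _ _⟩
  rw [heq]; exact hmem

end Cosets

section Topology

variable {G : Type u} [TopologicalSpace G] [Gyrogroup G] [TopologicalGyrogroup G]
  {H : Set G}

lemma gyro_continuous_gyroF : Continuous fun q : G × G => gyroF q.1 q.2 := by
  have ca : Continuous fun p : G × G => p.1 + p.2 := TopologicalGyrogroup.continuous_add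
  have cn : Continuous fun x : G => -x := TopologicalGyrogroup.continuous_neg
  unfold gyroF
  fun_prop

lemma gyro_gadd_closed (hH : IsLSubgyrogroup H) (hc : IsCompact H) {P : Set G}
    (hP : IsClosed P) : IsClosed (gadd P H) := by
  rw [← isOpen_compl_iff, isOpen_iff_mem_nhds]
  intro x hx
  have hn : IsOpen ((fun q : G × G => gyroF q.1 q.2) ⁻¹' Pᶜ) :=
    hP.isOpen_compl.preimage gyro_continuous_gyroF
  have hsub : ({x} : Set G) ×ˢ H ⊆ (fun q : G × G => gyroF q.1 q.2) ⁻¹' Pᶜ := by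
    rintro ⟨u, h⟩ ⟨hu, hh⟩
    simp only [Set.mem_singleton_iff] at hu
    subst hu
    intro hmem
    exact hx (gyro_mem_gadd_of_gyroF hH hh hmem)
  obtain ⟨U, V, hU, _, hxU, hHV, hUV⟩ :=
    generalized_tube_lemma isCompact_singleton hc hn hsub
  refine Filter.mem_of_superset (hU.mem_nhds (hxU rfl)) ?_
  intro u hu hmem
  obtain ⟨p, hp, h, hh, rfl⟩ := hmem
  have : (p + h, h) ∈ U ×ˢ V := ⟨hu, hHV hh⟩
  have hcontra := hUV this
  simp only [Set.mem_preimage, Set.mem_compl_iff] at hcontra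
  rw [gyroF_add] at hcontra
  exact hcontra hp

end Topology

theorem stmt14 {G : Type u} [TopologicalSpace G] [Gyrogroup G] [TopologicalGyrogroup G]
    (H : Set G) (hH : IsLSubgyrogroup H) (hc : IsCompact H) :
    IsClosedMap (Quotient.mk (Setoid.ker fun a : G => (fun h => a + h) '' H)) ∧
    ∀ y : Quotient (Setoid.ker fun a : G => (fun h => a + h) '' H),
      IsCompact (Quotient.mk (Setoid.ker fun a : G => (fun h => a + h) '' H) ⁻¹' {y}) := by
  set s := Setoid.ker fun a : G => (fun h => a + h) '' H with hs
  have hrel : ∀ x a : G, s.r x a ↔ x ∈ (fun h => a + h) '' H := by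
    intro x a
    exact gyro_coset_eq_iff hH x a
  have hqm : Topology.IsQuotientMap (Quotient.mk s) := isQuotientMap_quot_mk
  constructor
  · intro P hP
    rw [← hqm.isClosed_preimage]
    have heq : Quotient.mk s ⁻¹' (Quotient.mk s '' P) = gadd P H := by
      ext x
      constructor
      · rintro ⟨p, hp, hpx⟩
        have : s.r x p := Quotient.exact hpx.symm
        have hx : x ∈ (fun h => p + h) '' H := (hrel x p).1 this
        obtain ⟨h, hh, rfl⟩ := hx
        exact ⟨p, hp, h, hh, rfl⟩
      · rintro ⟨p, hp, h, hh, rfl⟩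
        refine ⟨p, hp, ?_⟩
        refine (Quotient.sound ?_).symm
        exact (hrel (p + h) p).2 ⟨h, hh, rfl⟩
    rw [heq]
    exact gyro_gadd_closed hH hc hP
  · intro y
    induction y using Quotient.ind with
    | _ a =>
      have heq : Quotient.mk s ⁻¹' {Quotient.mk s a} = (fun h => a + h) '' H := by
        ext x
        simp only [Set.mem_preimage, Set.mem_singleton_iff]
        constructor
        · intro hx
          exact (hrel x a).1 (Quotient.exact hx)
        · intro hx
          exact Quotient.sound ((hrel x a).2 hx)
      rw [heq]
      have cadd : Continuous fun h : G => a + h := by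
        have ca : Continuous fun p : G × G => p.1 + p.2 := TopologicalGyrogroup.continuous_add
        fun_prop
      exact hc.image cadd
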